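/- arXiv:2308.08066 — 7 statements merged into one kernel-verified Lean document; each statement's English description precedes it below -/
import Mathlib

section
/- Let S be a reachable set and K = closure{(R, λ) ∈ ℝⁿ⁺¹ : λ > 0, R/λ ∈ S} its liquidity cone. Then K is a closed convex cone containing 0, and it is 'almost upward closed': if (R, λ) ∈ K, R' ≥ R, and 0 ≤ λ' ≤ λ, then (R', λ') ∈ K. -/
/-!
The set `{(R, λ) : λ > 0, R / λ ∈ S}` is the convex cone generated by `S × {1}`, so its closure
is a closed convex cone; it contains `0 = lim_{t → 0⁺} t • (x, 1)` for any `x ∈ S`. Since `S` is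
upward closed and lies in the nonnegative orthant, the perspective set is stable under
`(R, λ) ↦ (R + d, t λ)` for `d ≥ 0` and `0 < t ≤ 1`; these maps are continuous, so the closure is
stable too, and letting `t → 0` (the closure is closed) reaches `λ' = 0`.
-/

open Set

variable {E : Type*}

theorem smul_mem_closure_of_nonneg [TopologicalSpace E] [SMul ℝ E] [ContinuousSMul ℝ E]
    {C : Set E} (hC : ∀ a : ℝ, 0 < a → ∀ p ∈ C, a • p ∈ C) {p : E} (hp : p ∈ closure C)
    {a : ℝ} (ha : 0 ≤ a) : a • p ∈ closure C := by
  have hpos : Ioi (0 : ℝ) ⊆ {a : ℝ | a • p ∈ closure C} := fun a ha =>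
    map_mem_closure (continuous_const_smul a) hp (hC a ha)
  have hclosed : IsClosed {a : ℝ | a • p ∈ closure C} :=
    isClosed_closure.preimage (continuous_id.smul continuous_const)
  exact (closure_Ioi (0 : ℝ) ▸ closure_minimal hpos hclosed) ha

section Perspective

variable [AddCommGroup E] [Module ℝ E]

def perspective (S : Set E) : Set (E × ℝ) :=
  {p | 0 < p.2 ∧ p.2⁻¹ • p.1 ∈ S}

variable {S : Set E}

theorem coe_hull_prod_singleton_one (hS : Convex ℝ S) :
    (ConvexCone.hull ℝ (S ×ˢ {(1 : ℝ)}) : Set (E × ℝ)) = perspective S := by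
  ext ⟨R, l⟩
  rw [SetLike.mem_coe, ConvexCone.mem_hull_of_convex (hS.prod (convex_singleton 1))]
  constructor
  · rintro ⟨r, hr, ⟨x, t⟩, ⟨hx, rfl : t = 1⟩, hrx⟩
    obtain ⟨rfl, rfl⟩ := Prod.ext_iff.1 hrx
    simpa [perspective, hr, hr.ne'] using hx
  · rintro ⟨hl, hR⟩
    exact ⟨l, hl, (l⁻¹ • R, 1), ⟨hR, rfl⟩, by simp [smul_smul, hl.ne']⟩

theorem Convex.perspective (hS : Convex ℝ S) : Convex ℝ (perspective S) :=
  coe_hull_prod_singleton_one hS ▸ (ConvexCone.hull ℝ _).convex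

theorem smul_mem_perspective {a : ℝ} (ha : 0 < a) {p : E × ℝ} (hp : p ∈ perspective S) :
    a • p ∈ perspective S := by
  refine ⟨mul_pos ha hp.1, ?_⟩
  simpa [smul_smul, mul_inv, mul_comm, ha.ne'] using hp.2

theorem zero_mem_closure_perspective [TopologicalSpace E] [ContinuousSMul ℝ E] (hS : S.Nonempty) :
    (0 : E × ℝ) ∈ closure (perspective S) := by
  obtain ⟨x, hx⟩ := hS
  have hx1 : (x, (1 : ℝ)) ∈ perspective S := ⟨one_pos, by simpa using hx⟩
  simpa using smul_mem_closure_of_nonneg (fun a ha _ => smul_mem_perspective ha)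
    (subset_closure hx1) le_rfl

section Order

variable [PartialOrder E] [IsOrderedAddMonoid E] [PosSMulMono ℝ E]

theorem mk_mem_perspective_of_le (hS0 : ∀ x ∈ S, 0 ≤ x) (hS : ∀ x ∈ S, ∀ y, x ≤ y → y ∈ S)
    {R R' : E} {l l' : ℝ} (hp : (R, l) ∈ perspective S) (hR : R ≤ R') (hl' : 0 < l')
    (hl : l' ≤ l) : (R', l') ∈ perspective S := by
  obtain ⟨hl0, hRS⟩ := hp
  have hR0 : 0 ≤ R := by
    simpa [smul_smul, hl0.ne'] using smul_nonneg hl0.le (hS0 _ hRS)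
  refine ⟨hl', hS _ hRS _ ?_⟩
  calc l⁻¹ • R ≤ l'⁻¹ • R := smul_le_smul_of_nonneg_right (inv_anti₀ hl' hl) hR0
    _ ≤ l'⁻¹ • R' := smul_le_smul_of_nonneg_left hR (inv_nonneg.2 hl'.le)

theorem mk_mem_closure_perspective_of_le [TopologicalSpace E] [ContinuousAdd E]
    (hS0 : ∀ x ∈ S, 0 ≤ x) (hS : ∀ x ∈ S, ∀ y, x ≤ y → y ∈ S) {R R' : E} {l l' : ℝ}
    (hp : (R, l) ∈ closure (perspective S)) (hR : R ≤ R') (hl' : 0 ≤ l') (hl : l' ≤ l) :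
    (R', l') ∈ closure (perspective S) := by
  have hscaled : Ioc (0 : ℝ) 1 ⊆ {t : ℝ | (R', t * l) ∈ closure (perspective S)} := by
    intro t ht
    have hmap := map_mem_closure (f := fun q : E × ℝ => (q.1 + (R' - R), t * q.2)) (by fun_prop)
      hp fun q hq => mk_mem_perspective_of_le hS0 hS hq
        (le_add_of_nonneg_right (sub_nonneg.2 hR)) (mul_pos ht.1 hq.1)
        (mul_le_of_le_one_left hq.1.le ht.2)
    simpa using hmap
  have hclosed : IsClosed {t : ℝ | (R', t * l) ∈ closure (perspective S)} :=
    isClosed_closure.preimage (by fun_prop)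
  have hl0 : 0 ≤ l := hl'.trans hl
  -- `t = l' / l` also serves `l = 0`: then `l' = 0` and Lean's `l' / 0 = 0`.
  have hmem := (closure_Ioc (zero_ne_one (α := ℝ)) ▸ closure_minimal hscaled hclosed)
    ⟨div_nonneg hl' hl0, div_le_one_of_le₀ hl hl0⟩
  rcases hl0.eq_or_lt with rfl | hlpos
  · simpa [le_antisymm hl hl'] using hmem
  · simpa [div_mul_cancel₀ _ hlpos.ne'] using hmem

end Order

end Perspective

theorem liquidity_cone_props_general (n : ℕ) (S : Set (Fin n → ℝ))
    (hS0 : ∀ R ∈ S, 0 ≤ R) (hS1 : S.Nonempty) (hS3 : Convex ℝ S)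
    (hS4 : ∀ R ∈ S, ∀ R' : Fin n → ℝ, R ≤ R' → R' ∈ S)
    (K : Set ((Fin n → ℝ) × ℝ))
    (hK : K = closure {p : (Fin n → ℝ) × ℝ | 0 < p.2 ∧ p.2⁻¹ • p.1 ∈ S}) :
    IsClosed K ∧ Convex ℝ K ∧ (0 : (Fin n → ℝ) × ℝ) ∈ K ∧
      (∀ (p : (Fin n → ℝ) × ℝ), p ∈ K → ∀ a : ℝ, 0 ≤ a → a • p ∈ K) ∧
      (∀ (R R' : Fin n → ℝ) (lam lam' : ℝ), (R, lam) ∈ K → R ≤ R' → 0 ≤ lam' → lam' ≤ lam →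
        (R', lam') ∈ K) := by
  change K = closure (perspective S) at hK
  subst hK
  exact ⟨isClosed_closure, hS3.perspective.closure, zero_mem_closure_perspective hS1,
    fun _ hp _ ha => smul_mem_closure_of_nonneg (fun _ ha _ => smul_mem_perspective ha) hp ha,
    fun _ _ _ _ hp hR hl' hl => mk_mem_closure_perspective_of_le hS0 hS4 hp hR hl' hl⟩

theorem liquidity_cone_props (n : ℕ) (S : Set (Fin n → ℝ))
    (hS0 : ∀ R ∈ S, 0 ≤ R) (hS1 : S.Nonempty) (hS2 : IsClosed S) (hS3 : Convex ℝ S)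
    (hS4 : ∀ R ∈ S, ∀ R' : Fin n → ℝ, R ≤ R' → R' ∈ S)
    (K : Set ((Fin n → ℝ) × ℝ))
    (hK : K = closure {p : (Fin n → ℝ) × ℝ | 0 < p.2 ∧ p.2⁻¹ • p.1 ∈ S}) :
    IsClosed K ∧ Convex ℝ K ∧ (0 : (Fin n → ℝ) × ℝ) ∈ K ∧
      (∀ (p : (Fin n → ℝ) × ℝ), p ∈ K → ∀ a : ℝ, 0 ≤ a → a • p ∈ K) ∧
      (∀ (R R' : Fin n → ℝ) (lam lam' : ℝ), (R, lam) ∈ K → R ≤ R' → 0 ≤ lam' → lam' ≤ lam →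
        (R', lam') ∈ K) :=
  liquidity_cone_props_general n S hS0 hS1 hS3 hS4 K hK
end

section
/- Let S be a reachable set with liquidity cone K and define the canonical trading function φ(R) = sup{λ : (R, λ) ∈ K} (with φ(R) = 0 if the set is empty). Then φ is concave on ℝ₊ⁿ. -/
/-!
The set `{(R, λ) : λ > 0, R / λ ∈ S}` is the convex cone generated by `S × {1}`, so `K` is a
closed convex cone, and every `(R, 0)` with `R ≥ 0` lies in `K` because `S` is upward closed.
If `(0, 1) ∈ K`, every slice `{λ : (R, λ) ∈ K}` over `R ≥ 0` contains `(0, ∞)`, so `φ` is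
identically `0` there. Otherwise every slice is bounded above (an unbounded slice rescales to
points `(R / λ, 1) → (0, 1)`), so `(R, φ R) ∈ K` by closedness, and convexity of `K` is
concavity of `φ`.
-/

open Filter Topology

namespace ConvexCone

variable {E : Type*} [AddCommGroup E] [Module ℝ E]

theorem coe_hull_prod_singleton_one {S : Set E} (hS : Convex ℝ S) :
    (hull ℝ (S ×ˢ {(1 : ℝ)}) : Set (E × ℝ)) = {p | 0 < p.2 ∧ p.2⁻¹ • p.1 ∈ S} := by
  ext ⟨x, t⟩
  rw [SetLike.mem_coe, mem_hull_of_convex (hS.prod (convex_singleton 1))]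
  constructor
  · rintro ⟨r, hr, hmem⟩
    rw [Set.mem_smul_set_iff_inv_smul_mem₀ hr.ne'] at hmem
    obtain ⟨hx, ht⟩ := hmem
    obtain rfl : t = r := by
      simp only [Prod.smul_snd, smul_eq_mul, Set.mem_singleton_iff] at ht
      field_simp at ht
      exact ht
    exact ⟨hr, hx⟩
  · rintro ⟨ht, hx⟩
    refine ⟨t, ht, (Set.mem_smul_set_iff_inv_smul_mem₀ ht.ne' _ _).2 ⟨hx, ?_⟩⟩
    simp [ht.ne']

variable (K : ConvexCone ℝ (E × ℝ))

theorem not_bddAbove_slice_of_mem (h : ((0 : E), (1 : ℝ)) ∈ K) {x : E} (hx : (x, 0) ∈ K) :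
    ¬BddAbove {t | (x, t) ∈ K} := fun hbdd ↦
  not_bddAbove_Ioi (0 : ℝ) <| hbdd.mono fun t ht ↦ by
    simpa using K.add_mem hx (K.smul_mem ht h)

variable [TopologicalSpace E] [ContinuousSMul ℝ E]

theorem bddAbove_slice_of_notMem (hK : IsClosed (K : Set (E × ℝ))) (h : ((0 : E), (1 : ℝ)) ∉ K)
    (x : E) : BddAbove {t | (x, t) ∈ K} := by
  by_contra hunbdd
  refine h (hK.mem_of_frequently_of_tendsto (f := fun t : ℝ ↦ (t⁻¹ • x, 1)) (b := atTop) ?_ ?_)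
  · have hfreq : ∃ᶠ t in atTop, (x, t) ∈ K := by
      rw [frequently_atTop]
      intro a
      obtain ⟨t, ht, hat⟩ := not_bddAbove_iff.1 hunbdd a
      exact ⟨t, hat.le, ht⟩
    refine (hfreq.and_eventually (eventually_gt_atTop 0)).mono fun t ⟨ht, hpos⟩ ↦ ?_
    simpa [hpos.ne'] using K.smul_mem (inv_pos.2 hpos) ht
  · simpa using ((tendsto_inv_atTop_zero (𝕜 := ℝ)).smul_const x).prodMk_nhds
      (tendsto_const_nhds (x := (1 : ℝ)))

theorem concaveOn_sSup_slice (hK : IsClosed (K : Set (E × ℝ))) {D : Set E} (hD : Convex ℝ D)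
    (hD0 : ∀ x ∈ D, (x, 0) ∈ K) : ConcaveOn ℝ D fun x ↦ sSup {t | (x, t) ∈ K} := by
  by_cases h01 : ((0 : E), (1 : ℝ)) ∈ K
  · refine (concaveOn_const 0 hD).congr fun x hx ↦ ?_
    exact (Real.sSup_of_not_bddAbove (K.not_bddAbove_slice_of_mem h01 (hD0 x hx))).symm
  have hmem : ∀ x ∈ D, (x, sSup {t | (x, t) ∈ K}) ∈ K := fun x hx ↦
    (hK.preimage (Continuous.prodMk_right x)).csSup_mem ⟨0, hD0 x hx⟩
      (K.bddAbove_slice_of_notMem hK h01 x)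
  refine ⟨hD, fun x hx y hy a b ha hb hab ↦ le_csSup (K.bddAbove_slice_of_notMem hK h01 _) ?_⟩
  simpa using K.convex (hmem x hx) (hmem y hy) ha hb hab

end ConvexCone

theorem mem_closure_setOf_inv_smul_mem {E : Type*} [AddCommGroup E] [PartialOrder E]
    [IsOrderedAddMonoid E] [Module ℝ E] [PosSMulMono ℝ E] [TopologicalSpace E]
    [ContinuousAdd E] [ContinuousSMul ℝ E] {S : Set E} (hS : S.Nonempty) (hSup : IsUpperSet S)
    {x : E} (hx : 0 ≤ x) : (x, (0 : ℝ)) ∈ closure {p : E × ℝ | 0 < p.2 ∧ p.2⁻¹ • p.1 ∈ S} := by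
  obtain ⟨y, hy⟩ := hS
  have hlim : Tendsto (fun t : ℝ ↦ (x + t • y, t)) (𝓝[>] 0) (𝓝 (x, 0)) := by
    have hcont : Continuous fun t : ℝ ↦ (x + t • y, t) := by fun_prop
    simpa using hcont.continuousWithinAt.tendsto (x := 0) (s := Set.Ioi 0)
  refine mem_closure_of_tendsto hlim (eventually_nhdsWithin_of_forall fun t (ht : 0 < t) ↦ ?_)
  refine ⟨ht, hSup ?_ hy⟩
  rw [smul_add, inv_smul_smul₀ ht.ne']
  exact le_add_of_nonneg_left (smul_nonneg (inv_nonneg.2 ht.le) hx)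

theorem canonical_trading_function_concave_general (n : ℕ) (S : Set (Fin n → ℝ))
    (hS1 : S.Nonempty) (hS3 : Convex ℝ S)
    (hS4 : ∀ R ∈ S, ∀ R' : Fin n → ℝ, R ≤ R' → R' ∈ S)
    (K : Set ((Fin n → ℝ) × ℝ))
    (hK : K = closure {p : (Fin n → ℝ) × ℝ | 0 < p.2 ∧ p.2⁻¹ • p.1 ∈ S})
    (φ : (Fin n → ℝ) → ℝ)
    (hφ : ∀ R, φ R = sSup {lam : ℝ | (R, lam) ∈ K}) :
    ConcaveOn ℝ {R : Fin n → ℝ | 0 ≤ R} φ := by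
  have hSup : IsUpperSet S := fun _ _ hle hR ↦ hS4 _ hR _ hle
  let C := (ConvexCone.hull ℝ (S ×ˢ {(1 : ℝ)})).closure
  have hKC : K = C := by
    rw [hK, ConvexCone.coe_closure, ConvexCone.coe_hull_prod_singleton_one hS3]
  obtain rfl : φ = _ := funext hφ
  subst hKC
  refine C.concaveOn_sSup_slice isClosed_closure (convex_Ici 0) fun x hx ↦ ?_
  rw [ConvexCone.mem_closure, ConvexCone.coe_hull_prod_singleton_one hS3]
  exact mem_closure_setOf_inv_smul_mem hS1 hSup hx

theorem canonical_trading_function_concave (n : ℕ) (S : Set (Fin n → ℝ))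
    (hS0 : ∀ R ∈ S, 0 ≤ R) (hS1 : S.Nonempty) (hS2 : IsClosed S) (hS3 : Convex ℝ S)
    (hS4 : ∀ R ∈ S, ∀ R' : Fin n → ℝ, R ≤ R' → R' ∈ S)
    (K : Set ((Fin n → ℝ) × ℝ))
    (hK : K = closure {p : (Fin n → ℝ) × ℝ | 0 < p.2 ∧ p.2⁻¹ • p.1 ∈ S})
    (φ : (Fin n → ℝ) → ℝ)
    (hφ : ∀ R, φ R = sSup {lam : ℝ | (R, lam) ∈ K}) :
    ConcaveOn ℝ {R : Fin n → ℝ | 0 ≤ R} φ :=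
  canonical_trading_function_concave_general n S hS1 hS3 hS4 K hK φ hφ
end

section
/- Let S be a reachable set with 0 ∉ S and canonical trading function φ. Then S = {R ∈ ℝ₊ⁿ : φ(R) ≥ 1}; i.e., the reachable set is exactly the 1-superlevel set of its canonical trading function. -/
theorem reachable_set_is_superlevel_set (n : ℕ) (S : Set (Fin n → ℝ))
    (hS0 : ∀ R ∈ S, 0 ≤ R) (hS1 : S.Nonempty) (hS2 : IsClosed S) (hS3 : Convex ℝ S)
    (hS4 : ∀ R ∈ S, ∀ R' : Fin n → ℝ, R ≤ R' → R' ∈ S)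
    (h0 : (0 : Fin n → ℝ) ∉ S)
    (φ : (Fin n → ℝ) → ℝ)
    (hφ : ∀ R, φ R = sSup {lam : ℝ | 0 < lam ∧ lam⁻¹ • R ∈ S}) :
    S = {R : Fin n → ℝ | 0 ≤ R ∧ 1 ≤ φ R} := by
  obtain ⟨ε, hε, hball⟩ : ∃ ε > 0, Metric.ball (0 : Fin n → ℝ) ε ⊆ Sᶜ :=
    Metric.isOpen_iff.mp hS2.isOpen_compl 0 h0
  have hbdd : ∀ R : Fin n → ℝ, BddAbove {lam : ℝ | 0 < lam ∧ lam⁻¹ • R ∈ S} := by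
    intro R
    refine ⟨‖R‖ / ε, fun lam hlam => ?_⟩
    have h1 : ε ≤ ‖lam⁻¹ • R‖ := by
      by_contra h
      push_neg at h
      exact hball (by simpa [Metric.mem_ball] using h) hlam.2
    rw [norm_smul, norm_inv, Real.norm_eq_abs, abs_of_pos hlam.1] at h1
    rw [le_div_iff₀ hε]
    have hlp := hlam.1
    have : lam * ε ≤ lam * (lam⁻¹ * ‖R‖) := by nlinarith
    rw [← mul_assoc, mul_inv_cancel₀ (ne_of_gt hlp), one_mul] at this
    exact this
  ext R
  simp only [Set.mem_setOf_eq]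
  constructor
  · intro hR
    refine ⟨hS0 R hR, ?_⟩
    rw [hφ]
    exact le_csSup (hbdd R) ⟨one_pos, by simpa using hR⟩
  · rintro ⟨hRpos, hR1⟩
    rw [hφ] at hR1
    set T := {lam : ℝ | 0 < lam ∧ lam⁻¹ • R ∈ S} with hT
    have hne : T.Nonempty := by
      by_contra h
      rw [Set.not_nonempty_iff_eq_empty] at h
      rw [h, Real.sSup_empty] at hR1
      linarith
    have hmem : ∀ t : ℝ, 0 < t → t < 1 → t⁻¹ • R ∈ S := by
      intro t ht ht1
      obtain ⟨μ, hμT, hμt⟩ := exists_lt_of_lt_csSup hne (lt_of_lt_of_le ht1 hR1)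
      refine hS4 _ hμT.2 _ ?_
      intro i
      simp only [Pi.smul_apply, smul_eq_mul]
      have hinv : μ⁻¹ ≤ t⁻¹ := inv_anti₀ ht (le_of_lt hμt)
      exact mul_le_mul_of_nonneg_right hinv (hRpos i)
    have hlim : Filter.Tendsto (fun k : ℕ => (1 - ((k:ℝ)+2)⁻¹)⁻¹ • R)
        Filter.atTop (nhds R) := by
      have h1 : Filter.Tendsto (fun k : ℕ => ((k:ℝ)+2)⁻¹) Filter.atTop (nhds 0) :=
        Filter.Tendsto.comp tendsto_inv_atTop_zero
          (Filter.tendsto_atTop_add_const_right _ 2 tendsto_natCast_atTop_atTop)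
      have h2 : Filter.Tendsto (fun k : ℕ => (1 - ((k:ℝ)+2)⁻¹)⁻¹) Filter.atTop (nhds 1) := by
        have := (tendsto_const_nhds.sub h1).inv₀ (by norm_num : (1:ℝ) - 0 ≠ 0)
        simpa using this
      simpa using h2.smul_const R
    refine hS2.mem_of_tendsto hlim (Filter.Eventually.of_forall fun k => ?_)
    have hk2 : (0:ℝ) < (k:ℝ) + 2 := by positivity
    have hle : ((k:ℝ)+2)⁻¹ ≤ 1/2 := by
      rw [inv_le_comm₀ hk2 (by norm_num)]
      have : (0:ℝ) ≤ (k:ℝ) := Nat.cast_nonneg k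
      norm_num
    have hpos : 0 < ((k:ℝ)+2)⁻¹ := by positivity
    exact hmem _ (by linarith) (by linarith)
end

section
/- For constants α, β, k > 0 with k > αβ, the function φ(R) = (βR₁ + αR₂ + √((βR₁ + αR₂)² + 4(k−αβ)R₁R₂)) / (2(k−αβ)) on ℝ₊² satisfies φ(R) ≥ 1 if and only if (R₁+α)(R₂+β) ≥ k, and φ is positively homogeneous and concave. -/
/-!
Write `η = k - αβ`, `L(R) = βR₁ + αR₂` and `D(R) = L(R)² + 4ηR₁R₂`, so that `φ R` is the larger root
`u` of `ηu² - L(R)u - R₁R₂ = 0`. Evaluating this quadratic at `u = 1` gives `η - L(R) - R₁R₂`,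
whose sign decides `φ R ≥ 1` because the other root is `≤ 0`, and `η - L - R₁R₂ ≤ 0` is `k ≤ (R₁ + α)(R₂ + β)`.
Homogeneity is clear since `D` is a quadratic form. For concavity it then suffices that `φ` is
superadditive on the orthant, which reduces to `√D(R) √D(S) ≤ B(R, S)` for the polar bilinear form `B`
of `D`: the reverse Cauchy–Schwarz inequality of a Lorentz form, here the identity
`B² - D(R) D(S) = 4η(αβ + η)(R₁S₂ - R₂S₁)²`.
-/

open Real

theorem concaveOn_of_superadditive_of_homogeneous {E : Type*} [AddCommMonoid E] [Module ℝ E]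
    {s : Set E} {f : E → ℝ} (hs : Convex ℝ s) (hsmul : ∀ a : ℝ, 0 ≤ a → ∀ x ∈ s, a • x ∈ s)
    (hadd : ∀ x ∈ s, ∀ y ∈ s, f x + f y ≤ f (x + y))
    (hhom : ∀ a : ℝ, 0 ≤ a → ∀ x ∈ s, f (a • x) = a * f x) :
    ConcaveOn ℝ s f := by
  refine ⟨hs, fun x hx y hy a b ha hb _ => ?_⟩
  calc a • f x + b • f y = f (a • x) + f (b • y) := by
        rw [hhom a ha x hx, hhom b hb y hy, smul_eq_mul, smul_eq_mul]
    _ ≤ f (a • x + b • y) := hadd _ (hsmul a ha x hx) _ (hsmul b hb y hy)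

theorem two_mul_le_add_sqrt_iff {η L m : ℝ} (hη : 0 < η) (hm : 0 ≤ m) :
    2 * η ≤ L + √(L ^ 2 + 4 * η * m) ↔ η ≤ L + m := by
  rcases le_or_gt (2 * η) L with hL | hL
  · have := sqrt_nonneg (L ^ 2 + 4 * η * m)
    constructor <;> intro <;> linarith
  · rw [← sub_le_iff_le_add', le_sqrt (by linarith) (by positivity)]
    constructor <;> intro <;> nlinarith

def reserveDiscrim (α β η : ℝ) (R : ℝ × ℝ) : ℝ :=
  (β * R.1 + α * R.2) ^ 2 + 4 * η * R.1 * R.2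

noncomputable def tickTradingFn (α β η : ℝ) (R : ℝ × ℝ) : ℝ :=
  (β * R.1 + α * R.2 + √(reserveDiscrim α β η R)) / (2 * η)

section tickTradingFn

variable {α β η : ℝ}

variable (α β) in
theorem reserveDiscrim_nonneg (hη : 0 ≤ η) {R : ℝ × ℝ} (hR : 0 ≤ R) :
    0 ≤ reserveDiscrim α β η R := by
  obtain ⟨hx, hy⟩ : 0 ≤ R.1 ∧ 0 ≤ R.2 := hR
  unfold reserveDiscrim
  positivity

theorem sqrt_reserveDiscrim_smul {a : ℝ} (ha : 0 ≤ a) (R : ℝ × ℝ) :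
    √(reserveDiscrim α β η (a • R)) = a * √(reserveDiscrim α β η R) := by
  have hsq : reserveDiscrim α β η (a • R) = a ^ 2 * reserveDiscrim α β η R := by
    simp only [reserveDiscrim, Prod.smul_fst, Prod.smul_snd, smul_eq_mul]
    ring
  rw [hsq, sqrt_mul (sq_nonneg a), sqrt_sq ha]

theorem sqrt_reserveDiscrim_add_le (hα : 0 ≤ α) (hβ : 0 ≤ β) (hη : 0 ≤ η) {R S : ℝ × ℝ}
    (hR : 0 ≤ R) (hS : 0 ≤ S) :
    √(reserveDiscrim α β η R) + √(reserveDiscrim α β η S) ≤ √(reserveDiscrim α β η (R + S)) := by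
  have hDR := reserveDiscrim_nonneg α β hη hR
  have hDS := reserveDiscrim_nonneg α β hη hS
  have hDRS := reserveDiscrim_nonneg α β hη (add_nonneg hR hS)
  obtain ⟨x, y⟩ := R
  obtain ⟨p, q⟩ := S
  obtain ⟨hx, hy⟩ : 0 ≤ x ∧ 0 ≤ y := hR
  obtain ⟨hp, hq⟩ : 0 ≤ p ∧ 0 ≤ q := hS
  set B := (β * x + α * y) * (β * p + α * q) + 2 * η * (x * q + y * p) with hB
  have hpolar : reserveDiscrim α β η ((x, y) + (p, q)) =
      reserveDiscrim α β η (x, y) + reserveDiscrim α β η (p, q) + 2 * B := by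
    simp only [reserveDiscrim, Prod.mk_add_mk]
    ring
  have hCS : √(reserveDiscrim α β η (x, y)) * √(reserveDiscrim α β η (p, q)) ≤ B := by
    have hlorentz : B ^ 2 - reserveDiscrim α β η (x, y) * reserveDiscrim α β η (p, q) =
        4 * η * (α * β + η) * (x * q - y * p) ^ 2 := by
      simp only [hB, reserveDiscrim]
      ring
    have hBnn : 0 ≤ B := by rw [hB]; positivity
    rw [← sqrt_mul hDR, sqrt_le_left hBnn]
    nlinarith [mul_nonneg (mul_nonneg hη (add_nonneg (mul_nonneg hα hβ) hη))
      (sq_nonneg (x * q - y * p))]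
  rw [le_sqrt (by positivity) hDRS, add_sq, sq_sqrt hDR, sq_sqrt hDS, hpolar]
  linarith

theorem one_le_tickTradingFn_iff (hη : 0 < η) {R : ℝ × ℝ} (hR : 0 ≤ R) :
    1 ≤ tickTradingFn α β η R ↔ η ≤ β * R.1 + α * R.2 + R.1 * R.2 := by
  obtain ⟨hx, hy⟩ : 0 ≤ R.1 ∧ 0 ≤ R.2 := hR
  rw [tickTradingFn, one_le_div (by positivity), reserveDiscrim, mul_assoc _ R.1]
  exact two_mul_le_add_sqrt_iff hη (mul_nonneg hx hy)

theorem tickTradingFn_smul {a : ℝ} (ha : 0 ≤ a) (R : ℝ × ℝ) :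
    tickTradingFn α β η (a • R) = a * tickTradingFn α β η R := by
  rw [tickTradingFn, tickTradingFn, sqrt_reserveDiscrim_smul ha, Prod.smul_fst, Prod.smul_snd,
    smul_eq_mul, smul_eq_mul]
  ring

theorem tickTradingFn_add_le (hα : 0 ≤ α) (hβ : 0 ≤ β) (hη : 0 ≤ η) {R S : ℝ × ℝ}
    (hR : 0 ≤ R) (hS : 0 ≤ S) :
    tickTradingFn α β η R + tickTradingFn α β η S ≤ tickTradingFn α β η (R + S) := by
  have := sqrt_reserveDiscrim_add_le hα hβ hη hR hS
  rw [tickTradingFn, tickTradingFn, tickTradingFn, ← add_div, Prod.fst_add, Prod.snd_add]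
  gcongr ?_ / _
  linarith

theorem concaveOn_tickTradingFn (hα : 0 ≤ α) (hβ : 0 ≤ β) (hη : 0 ≤ η) :
    ConcaveOn ℝ {R : ℝ × ℝ | 0 ≤ R} (tickTradingFn α β η) :=
  concaveOn_of_superadditive_of_homogeneous (convex_Ici 0)
    (fun a ha R (hR : 0 ≤ R) => (smul_nonneg ha hR : 0 ≤ a • R))
    (fun _ hR _ hS => tickTradingFn_add_le hα hβ hη hR hS)
    (fun _ ha R _ => tickTradingFn_smul ha R)

end tickTradingFn

theorem univ3_canonical_trading_function (α β k : ℝ) (hα : 0 < α) (hβ : 0 < β)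
    (hk : α * β < k)
    (φ : ℝ × ℝ → ℝ)
    (hφ : ∀ R, φ R = (β * R.1 + α * R.2 +
      Real.sqrt ((β * R.1 + α * R.2) ^ 2 + 4 * (k - α * β) * R.1 * R.2)) /
        (2 * (k - α * β))) :
    (∀ R : ℝ × ℝ, 0 ≤ R → (1 ≤ φ R ↔ k ≤ (R.1 + α) * (R.2 + β))) ∧
      (∀ (a : ℝ) (R : ℝ × ℝ), 0 ≤ a → 0 ≤ R → φ (a • R) = a * φ R) ∧
      ConcaveOn ℝ {R : ℝ × ℝ | 0 ≤ R} φ := by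
  have hη : 0 < k - α * β := sub_pos.mpr hk
  obtain rfl : φ = tickTradingFn α β (k - α * β) := funext hφ
  refine ⟨fun R hR => ?_, fun a R ha _ => tickTradingFn_smul ha R,
    concaveOn_tickTradingFn hα.le hβ.le hη.le⟩
  rw [one_le_tickTradingFn_iff hη hR]
  constructor <;> intro <;> linarith
end

section
/- For η ≥ 0, the function g(x, y) = √((x+y)² + 4ηxy) is concave on ℝ₊². -/
theorem sqrt_term_concave (η : ℝ) (hη : 0 ≤ η) :
    ConcaveOn ℝ {p : ℝ × ℝ | 0 ≤ p}
      (fun p : ℝ × ℝ => Real.sqrt ((p.1 + p.2) ^ 2 + 4 * η * p.1 * p.2)) := by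
  constructor
  · intro p hp q hq a b ha hb hab
    constructor
    · exact add_nonneg (smul_nonneg ha hp.1) (smul_nonneg hb hq.1)
    · exact add_nonneg (smul_nonneg ha hp.2) (smul_nonneg hb hq.2)
  · intro p hp q hq a b ha hb hab
    simp only [smul_eq_mul]
    have hp1 : (0:ℝ) ≤ p.1 := hp.1
    have hp2 : (0:ℝ) ≤ p.2 := hp.2
    have hq1 : (0:ℝ) ≤ q.1 := hq.1
    have hq2 : (0:ℝ) ≤ q.2 := hq.2
    set Qp : ℝ := (p.1 + p.2) ^ 2 + 4 * η * p.1 * p.2 with hQp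
    set Qq : ℝ := (q.1 + q.2) ^ 2 + 4 * η * q.1 * q.2 with hQq
    have hQpnn : 0 ≤ Qp := by positivity
    have hQqnn : 0 ≤ Qq := by positivity
    set B : ℝ := (p.1 + p.2) * (q.1 + q.2) + 2 * η * (p.1 * q.2 + p.2 * q.1) with hB
    have hBnn : 0 ≤ B := by positivity
    have hCS : Qp * Qq ≤ B ^ 2 := by
      have key : B ^ 2 - Qp * Qq = 4 * η * (1 + η) * (p.1 * q.2 - q.1 * p.2) ^ 2 := by
        simp only [hB, hQp, hQq]; ring
      nlinarith [sq_nonneg (p.1 * q.2 - q.1 * p.2), mul_nonneg hη hη]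
    have hsq : Real.sqrt Qp * Real.sqrt Qq ≤ B := by
      rw [← Real.sqrt_mul hQpnn]
      calc Real.sqrt (Qp * Qq) ≤ Real.sqrt (B ^ 2) := Real.sqrt_le_sqrt hCS
        _ = B := by rw [Real.sqrt_sq hBnn]
    have hrhs : 0 ≤ a * Real.sqrt Qp + b * Real.sqrt Qq := by positivity
    have h1 : ((a • p + b • q).1 + (a • p + b • q).2) ^ 2
        + 4 * η * (a • p + b • q).1 * (a • p + b • q).2
        = a ^ 2 * Qp + b ^ 2 * Qq + 2 * a * b * B := by
      simp only [Prod.fst_add, Prod.snd_add, Prod.smul_fst, Prod.smul_snd, smul_eq_mul,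
        hQp, hQq, hB]
      ring
    rw [h1]
    rw [show a * Real.sqrt Qp + b * Real.sqrt Qq
        = Real.sqrt ((a * Real.sqrt Qp + b * Real.sqrt Qq) ^ 2) from
      (Real.sqrt_sq hrhs).symm]
    apply Real.sqrt_le_sqrt
    have e1 : Real.sqrt Qp ^ 2 = Qp := Real.sq_sqrt hQpnn
    have e2 : Real.sqrt Qq ^ 2 = Qq := Real.sq_sqrt hQqnn
    nlinarith [mul_le_mul_of_nonneg_left hsq (mul_nonneg ha hb), Real.sqrt_nonneg Qp,
      Real.sqrt_nonneg Qq, mul_nonneg ha hb]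
end

section
/- Let S, S' be reachable sets with portfolio value functions V(c) = inf{c·R : R ∈ S} and V'(c) = inf{c·R : R ∈ S'}. Then S_{V+V'} = S + S', where S_W = {R ∈ ℝ₊ⁿ : c·R ≥ W(c) for all c ≥ 0}; i.e., addition of portfolio value functions corresponds to Minkowski addition of the reachable sets. -/
open Pointwise

theorem sum_closed_aux (n : ℕ) (S S' : Set (Fin n → ℝ))
    (hS0 : ∀ R ∈ S, 0 ≤ R) (hS'0 : ∀ R ∈ S', 0 ≤ R)
    (hS2 : IsClosed S) (hS'2 : IsClosed S') : IsClosed (S + S') := by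
  apply IsSeqClosed.isClosed
  intro x p hx hp
  choose a ha b hb hab using hx
  obtain ⟨C, hC⟩ := (hp.norm.bddAbove_range)
  have hCn : ∀ k, ‖x k‖ ≤ C := fun k => hC ⟨k, rfl⟩
  have haC : ∀ k, a k ∈ Metric.closedBall (0 : Fin n → ℝ) C := by
    intro k
    rw [Metric.mem_closedBall, dist_zero_right]
    refine le_trans ?_ (hCn k)
    rw [pi_norm_le_iff_of_nonneg (norm_nonneg _)]
    intro i
    have h1 : 0 ≤ a k i := (hS0 _ (ha k)) i
    have h2 : 0 ≤ b k i := (hS'0 _ (hb k)) i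
    have h3 : a k i ≤ x k i := by
      have := congrFun (hab k) i
      simp only [Pi.add_apply] at this
      linarith
    rw [Real.norm_eq_abs, abs_of_nonneg h1]
    exact h3.trans ((le_abs_self _).trans (norm_le_pi_norm (x k) i))
  obtain ⟨l, hl, φ, hφ, hconv⟩ :=
    (isCompact_closedBall (0 : Fin n → ℝ) C).tendsto_subseq haC
  have hlS : l ∈ S := hS2.isSeqClosed (fun k => ha (φ k)) hconv
  have hbconv : Filter.Tendsto (fun k => b (φ k)) Filter.atTop (nhds (p - l)) := by
    have : (fun k => b (φ k)) = fun k => x (φ k) - a (φ k) := by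
      funext k; rw [← hab (φ k)]; ring
    rw [this]
    exact ((hp.comp (hφ.tendsto_atTop)).sub hconv)
  have hplS : p - l ∈ S' := hS'2.isSeqClosed (fun k => hb (φ k)) hbconv
  exact ⟨l, hlS, p - l, hplS, by ring⟩

theorem portfolio_value_addition (n : ℕ) (S S' : Set (Fin n → ℝ))
    (hS0 : ∀ R ∈ S, 0 ≤ R) (hS1 : S.Nonempty) (hS2 : IsClosed S) (hS3 : Convex ℝ S)
    (hS4 : ∀ R ∈ S, ∀ R' : Fin n → ℝ, R ≤ R' → R' ∈ S)
    (hS'0 : ∀ R ∈ S', 0 ≤ R) (hS'1 : S'.Nonempty) (hS'2 : IsClosed S') (hS'3 : Convex ℝ S')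
    (hS'4 : ∀ R ∈ S', ∀ R' : Fin n → ℝ, R ≤ R' → R' ∈ S')
    (V V' : (Fin n → ℝ) → ℝ)
    (hV : ∀ c, V c = sInf ((fun R => ∑ i, c i * R i) '' S))
    (hV' : ∀ c, V' c = sInf ((fun R => ∑ i, c i * R i) '' S')) :
    {R : Fin n → ℝ | 0 ≤ R ∧ ∀ c : Fin n → ℝ, 0 ≤ c → V c + V' c ≤ ∑ i, c i * R i}
      = S + S' := by
  have hbdd : ∀ (T : Set (Fin n → ℝ)), (∀ R ∈ T, 0 ≤ R) → ∀ c : Fin n → ℝ, 0 ≤ c →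
      ∀ z ∈ ((fun R => ∑ i, c i * R i) '' T), (0:ℝ) ≤ z := by
    rintro T hT c hc z ⟨R, hR, rfl⟩
    exact Finset.sum_nonneg fun i _ => mul_nonneg (hc i) ((hT R hR) i)
  ext R
  simp only [Set.mem_setOf_eq]
  constructor
  · rintro ⟨hR0, hR⟩
    by_contra hRn
    obtain ⟨f, u, hfu, hsep⟩ := geometric_hahn_banach_point_closed
      (hS3.add hS'3) (sum_closed_aux n S S' hS0 hS'0 hS2 hS'2) hRn
    set c : Fin n → ℝ := fun i => f (Pi.single i 1) with hc
    have hfc : ∀ y : Fin n → ℝ, f y = ∑ i, c i * y i := by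
      intro y
      have hy : y = ∑ i, y i • (Pi.single i 1 : Fin n → ℝ) := by
        funext j
        simp [Pi.single_apply, Finset.sum_apply, mul_comm]
      conv_lhs => rw [hy]
      rw [map_sum]
      congr 1; funext i
      rw [map_smul, smul_eq_mul, mul_comm]
    -- nonnegativity of c
    obtain ⟨a₀, ha₀⟩ := id hS1
    obtain ⟨b₀, hb₀⟩ := id hS'1
    have hc0 : 0 ≤ c := by
      rw [Pi.le_def]
      intro i
      simp only [Pi.zero_apply]
      by_contra hci
      push_neg at hci
      set ei : Fin n → ℝ := Pi.single i 1 with hei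
      set t : ℝ := max 0 ((u - f (a₀ + b₀)) / c i) with ht
      have ht0 : 0 ≤ t := le_max_left _ _
      have hmem : a₀ + t • ei + b₀ ∈ S + S' := by
        refine ⟨a₀ + t • ei, ?_, b₀, hb₀, rfl⟩
        apply hS4 a₀ ha₀
        intro j
        have h0 : 0 ≤ t * ei j := mul_nonneg ht0 (by
          rw [hei]; by_cases h : i = j <;> simp [Pi.single_apply, h])
        simp only [Pi.add_apply, Pi.smul_apply, smul_eq_mul]
        linarith
      have hval : f (a₀ + t • ei + b₀) ≤ u := by
        have hfe : f (a₀ + t • ei + b₀) = f (a₀ + b₀) + t * c i := by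
          have : f ei = c i := by rw [hei, hc]
          simp only [map_add, map_smul, smul_eq_mul, this]
          ring
        rw [hfe]
        have htge : (u - f (a₀ + b₀)) / c i ≤ t := le_max_right _ _
        have : t * c i ≤ u - f (a₀ + b₀) := by
          rw [div_le_iff_of_neg hci] at htge
          linarith [htge]
        linarith
      exact absurd (hsep _ hmem) (not_lt.mpr hval)
    -- derive contradiction
    have hV'bound : ∀ a ∈ S, u - f a ≤ V' c := by
      intro a ha
      rw [hV']
      apply le_csInf (Set.Nonempty.image _ hS'1)
      rintro z ⟨b, hb, rfl⟩
      have := hsep (a + b) ⟨a, ha, b, hb, rfl⟩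
      rw [hfc (a + b)] at this
      have heq : ∑ i, c i * (a + b) i = (∑ i, c i * a i) + ∑ i, c i * b i := by
        simp only [Pi.add_apply]
        rw [← Finset.sum_add_distrib]
        congr 1; funext i; ring
      rw [heq] at this
      rw [hfc a] at *
      linarith
    have hVbound : u - V' c ≤ V c := by
      rw [hV]
      apply le_csInf (Set.Nonempty.image _ hS1)
      rintro z ⟨a, ha, rfl⟩
      have := hV'bound a ha
      rw [hfc a] at this
      linarith
    have hRf := hR c hc0
    rw [← hfc R] at hRf
    linarith
  · rintro ⟨a, ha, b, hb, rfl⟩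
    refine ⟨fun i => add_nonneg ((hS0 a ha) i) ((hS'0 b hb) i), ?_⟩
    intro c hc0
    have h1 : V c ≤ ∑ i, c i * a i := by
      rw [hV]
      exact csInf_le ⟨0, fun z hz => hbdd S hS0 c hc0 z hz⟩ ⟨a, ha, rfl⟩
    have h2 : V' c ≤ ∑ i, c i * b i := by
      rw [hV']
      exact csInf_le ⟨0, fun z hz => hbdd S' hS'0 c hc0 z hz⟩ ⟨b, hb, rfl⟩
    have heq : ∑ i, c i * (a + b) i = (∑ i, c i * a i) + ∑ i, c i * b i := by
      simp only [Pi.add_apply]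
      rw [← Finset.sum_add_distrib]
      congr 1; funext i; ring
    rw [heq]
    linarith
end

section
/- Let S be a reachable set with canonical trading function φ and portfolio value function V(c) = inf{c·R : R ∈ S}. Then V(c) = inf_{R > 0} c·R / φ(R) for all c ∈ ℝ₊ⁿ, and φ(R) = inf_{c > 0} c·R / V(c) for all R ∈ ℝ₊ⁿ (whenever the denominators are positive). -/
theorem trading_function_portfolio_value_duality (n : ℕ) (S : Set (Fin n → ℝ))
    (hS0 : ∀ R ∈ S, 0 ≤ R) (hS1 : S.Nonempty) (hS2 : IsClosed S) (hS3 : Convex ℝ S)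
    (hS4 : ∀ R ∈ S, ∀ R' : Fin n → ℝ, R ≤ R' → R' ∈ S)
    (h0 : (0 : Fin n → ℝ) ∉ S)
    (φ : (Fin n → ℝ) → ℝ)
    (hφ : ∀ R, φ R = sSup {lam : ℝ | 0 < lam ∧ lam⁻¹ • R ∈ S})
    (V : (Fin n → ℝ) → ℝ)
    (hV : ∀ c, V c = sInf ((fun R => ∑ i, c i * R i) '' S)) :
    (∀ c : Fin n → ℝ, 0 ≤ c →
      V c = sInf {x : ℝ | ∃ R : Fin n → ℝ, (∀ i, 0 < R i) ∧ x = (∑ i, c i * R i) / φ R}) ∧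
    (∀ R : Fin n → ℝ, 0 ≤ R →
      φ R = sInf {x : ℝ | ∃ c : Fin n → ℝ, (∀ i, 0 < c i) ∧ x = (∑ i, c i * R i) / V c}) := by
  classical
  obtain ⟨R₀, hR₀⟩ := hS1
  rcases Nat.eq_zero_or_pos n with hn | hn
  · subst hn
    exact absurd (by rwa [show (0 : Fin 0 → ℝ) = R₀ from funext fun i => i.elim0]) h0
  have huniv : (Finset.univ : Finset (Fin n)).Nonempty := ⟨⟨0, hn⟩, Finset.mem_univ _⟩
  obtain ⟨ε, hε, hball⟩ : ∃ ε > 0, ∀ x ∈ S, ε ≤ ∑ i, x i := by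
    obtain ⟨ε, hε, hb⟩ := Metric.isOpen_iff.1 hS2.isOpen_compl 0 h0
    refine ⟨ε / 2, by linarith, fun x hx => ?_⟩
    have hxnorm : ε / 2 ≤ ‖x‖ := by
      by_contra h
      push_neg at h
      exact hb (by simpa [Metric.mem_ball, dist_zero_right] using h.trans (by linarith)) hx
    have hx0 := hS0 x hx
    refine hxnorm.trans ?_
    rw [pi_norm_le_iff_of_nonneg (Finset.sum_nonneg fun i _ => hx0 i)]
    intro i
    rw [Real.norm_eq_abs, abs_of_nonneg (hx0 i)]
    exact Finset.single_le_sum (fun j _ => hx0 j) (Finset.mem_univ i)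
  have hVim : ∀ c : Fin n → ℝ, ((fun R => ∑ i, c i * R i) '' S).Nonempty :=
    fun c => ⟨_, ⟨R₀, hR₀, rfl⟩⟩
  have hVbdd : ∀ c : Fin n → ℝ, 0 ≤ c → 0 ∈ lowerBounds ((fun R => ∑ i, c i * R i) '' S) := by
    rintro c hc x ⟨R, hR, rfl⟩
    exact Finset.sum_nonneg fun i _ => mul_nonneg (hc i) (hS0 R hR i)
  have hVnn : ∀ c : Fin n → ℝ, 0 ≤ c → 0 ≤ V c := by
    intro c hc
    rw [hV]
    exact le_csInf (hVim c) (hVbdd c hc)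
  have hVle : ∀ c : Fin n → ℝ, 0 ≤ c → ∀ x ∈ S, V c ≤ ∑ i, c i * x i := by
    intro c hc x hx
    rw [hV]
    exact csInf_le ⟨0, hVbdd c hc⟩ ⟨x, hx, rfl⟩
  have hVpos : ∀ c : Fin n → ℝ, (∀ i, 0 < c i) → 0 < V c := by
    intro c hc
    set m := Finset.univ.inf' huniv c with hm
    have hmpos : 0 < m := (Finset.lt_inf'_iff huniv).2 fun i _ => hc i
    have : 0 < m * ε := mul_pos hmpos hε
    refine lt_of_lt_of_le this ?_
    rw [hV]
    refine le_csInf (hVim c) ?_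
    rintro x ⟨R, hR, rfl⟩
    calc m * ε ≤ m * ∑ i, R i := mul_le_mul_of_nonneg_left (hball R hR) hmpos.le
      _ = ∑ i, m * R i := Finset.mul_sum _ _ _
      _ ≤ ∑ i, c i * R i := Finset.sum_le_sum fun i _ =>
          mul_le_mul_of_nonneg_right (Finset.inf'_le _ (Finset.mem_univ i)) (hS0 R hR i)
  have hLbdd : ∀ R : Fin n → ℝ, BddAbove {lam : ℝ | 0 < lam ∧ lam⁻¹ • R ∈ S} := by
    intro R
    refine ⟨(∑ i, R i) / ε, fun lam ⟨hlam, hmem⟩ => ?_⟩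
    have h1 := hball _ hmem
    have hsum : ∑ i, (lam⁻¹ • R) i = lam⁻¹ * ∑ i, R i := by
      simp [Finset.mul_sum]
    rw [hsum] at h1
    rw [le_div_iff₀ hε]
    calc lam * ε ≤ lam * (lam⁻¹ * ∑ i, R i) := mul_le_mul_of_nonneg_left h1 hlam.le
      _ = ∑ i, R i := by field_simp
  have hφnn : ∀ R : Fin n → ℝ, 0 ≤ φ R := by
    intro R
    rw [hφ]
    exact Real.sSup_nonneg fun lam hlam => hlam.1.le
  have hφpos : ∀ R : Fin n → ℝ, (∀ i, 0 < R i) → 0 < φ R := by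
    intro R hR
    set lam₀ := Finset.univ.inf' huniv (fun i => R i / (R₀ i + 1)) with hlam₀
    have hlam₀pos : 0 < lam₀ := (Finset.lt_inf'_iff huniv).2 fun i _ => by
      have h2 : (0:ℝ) ≤ R₀ i := hS0 R₀ hR₀ i
      exact div_pos (hR i) (by linarith)
    have hmem : lam₀⁻¹ • R ∈ S := by
      refine hS4 R₀ hR₀ _ fun i => ?_
      have h1 : lam₀ ≤ R i / (R₀ i + 1) := Finset.inf'_le _ (Finset.mem_univ i)
      have h2 : (0:ℝ) ≤ R₀ i := hS0 R₀ hR₀ i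
      have h3 : lam₀ * (R₀ i + 1) ≤ R i := by
        rw [← le_div_iff₀ (by linarith)]; exact h1
      show R₀ i ≤ lam₀⁻¹ * R i
      rw [le_inv_mul_iff₀ hlam₀pos]
      nlinarith
    rw [hφ]
    exact lt_of_lt_of_le hlam₀pos (le_csSup (hLbdd R) ⟨hlam₀pos, hmem⟩)
  have hkey : ∀ R : Fin n → ℝ, 0 ≤ R → ∀ c : Fin n → ℝ, 0 ≤ c →
      φ R * V c ≤ ∑ i, c i * R i := by
    intro R hR c hc
    have hcR : 0 ≤ ∑ i, c i * R i := Finset.sum_nonneg fun i _ => mul_nonneg (hc i) (hR i)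
    rcases eq_or_lt_of_le (hVnn c hc) with hV0 | hV0
    · rw [← hV0, mul_zero]; exact hcR
    rcases Set.eq_empty_or_nonempty {lam : ℝ | 0 < lam ∧ lam⁻¹ • R ∈ S} with hL | hL
    · rw [hφ, hL, Real.sSup_empty, zero_mul]; exact hcR
    have hmain : φ R ≤ (∑ i, c i * R i) / V c := by
      rw [hφ]
      refine csSup_le hL ?_
      rintro lam ⟨hlam, hmem⟩
      have h1 : V c ≤ ∑ i, c i * (lam⁻¹ • R) i := hVle c hc _ hmem
      have h2 : ∑ i, c i * (lam⁻¹ • R) i = lam⁻¹ * ∑ i, c i * R i := by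
        rw [Finset.mul_sum]
        exact Finset.sum_congr rfl fun i _ => by
          show c i * (lam⁻¹ * R i) = lam⁻¹ * (c i * R i); ring
      rw [h2] at h1
      rw [le_div_iff₀ hV0]
      calc lam * V c ≤ lam * (lam⁻¹ * ∑ i, c i * R i) := mul_le_mul_of_nonneg_left h1 hlam.le
        _ = ∑ i, c i * R i := by field_simp
    calc φ R * V c ≤ ((∑ i, c i * R i) / V c) * V c :=
          mul_le_mul_of_nonneg_right hmain (hVnn c hc)
      _ = ∑ i, c i * R i := by field_simp
  constructor
  · -- first identity
    intro c hc
    set A := {x : ℝ | ∃ R : Fin n → ℝ, (∀ i, 0 < R i) ∧ x = (∑ i, c i * R i) / φ R} with hA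
    have hR₀' : ∀ i, 0 < R₀ i + 1 := fun i => by
      have h2 : (0:ℝ) ≤ R₀ i := hS0 R₀ hR₀ i; linarith
    have hAne : A.Nonempty := ⟨_, (fun i => R₀ i + 1), hR₀', rfl⟩
    have hAlb : V c ∈ lowerBounds A := by
      rintro x ⟨R, hR, rfl⟩
      rw [le_div_iff₀ (hφpos R hR), mul_comm]
      exact hkey R (fun i => (hR i).le) c hc
    refine le_antisymm (le_csInf hAne hAlb) ?_
    refine le_of_forall_pos_le_add fun δ hδ => ?_
    have hlt : sInf ((fun R => ∑ i, c i * R i) '' S) < V c + δ / 2 := by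
      rw [← hV]; linarith
    obtain ⟨x, ⟨R, hRS, rfl⟩, hx⟩ := exists_lt_of_csInf_lt (hVim c) hlt
    simp only at hx
    set t := δ / (2 * ((∑ i, c i) + 1)) with ht
    have hcsum : 0 ≤ ∑ i, c i := Finset.sum_nonneg fun i _ => hc i
    have htpos : 0 < t := div_pos hδ (by linarith)
    set R' : Fin n → ℝ := fun i => R i + t with hR'
    have hR'pos : ∀ i, 0 < R' i := fun i => by
      have h2 : (0:ℝ) ≤ R i := hS0 R hRS i
      show 0 < R i + t; linarith
    have hR'S : R' ∈ S := hS4 R hRS R' fun i => by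
      show R i ≤ R i + t; linarith
    have hφ1 : 1 ≤ φ R' := by
      rw [hφ]
      exact le_csSup (hLbdd R') ⟨one_pos, by simpa using hR'S⟩
    have hcR' : (0:ℝ) ≤ ∑ i, c i * R' i :=
      Finset.sum_nonneg fun i _ => mul_nonneg (hc i) (hR'pos i).le
    have hstep : (∑ i, c i * R' i) / φ R' ≤ ∑ i, c i * R' i :=
      div_le_self hcR' hφ1
    have hsum2 : ∑ i, c i * R' i = (∑ i, c i * R i) + t * ∑ i, c i := by
      rw [Finset.mul_sum, ← Finset.sum_add_distrib]
      exact Finset.sum_congr rfl fun i _ => by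
        show c i * (R i + t) = c i * R i + t * c i; ring
    have htb : t * ∑ i, c i ≤ δ / 2 := by
      rw [ht, div_mul_eq_mul_div, div_le_div_iff₀ (by linarith) (by norm_num)]
      nlinarith
    calc sInf A ≤ (∑ i, c i * R' i) / φ R' :=
          csInf_le ⟨V c, hAlb⟩ ⟨R', hR'pos, rfl⟩
      _ ≤ ∑ i, c i * R' i := hstep
      _ = (∑ i, c i * R i) + t * ∑ i, c i := hsum2
      _ ≤ V c + δ := by linarith
  · -- second identity
    intro R hR
    set B := {x : ℝ | ∃ c : Fin n → ℝ, (∀ i, 0 < c i) ∧ x = (∑ i, c i * R i) / V c} with hB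
    have hBne : B.Nonempty := ⟨_, (fun _ => 1), fun _ => one_pos, rfl⟩
    have hBlb : φ R ∈ lowerBounds B := by
      rintro x ⟨c, hcpos, rfl⟩
      rw [le_div_iff₀ (hVpos c hcpos)]
      exact hkey R hR c (fun i => (hcpos i).le)
    refine le_antisymm (le_csInf hBne hBlb) ?_
    refine le_of_forall_pos_le_add fun δ hδ => ?_
    have hφRδ : 0 < φ R + δ := by have := hφnn R; linarith
    set p : Fin n → ℝ := (φ R + δ)⁻¹ • R with hp
    have hpnn : 0 ≤ p := fun i => mul_nonneg (inv_nonneg.2 hφRδ.le) (hR i)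
    have hpn : p ∉ S := by
      intro hpS
      have h1 : φ R + δ ≤ sSup {lam : ℝ | 0 < lam ∧ lam⁻¹ • R ∈ S} :=
        le_csSup (hLbdd R) ⟨hφRδ, hpS⟩
      rw [← hφ] at h1
      linarith
    obtain ⟨f, u, hfu, hfS⟩ := geometric_hahn_banach_point_closed hS3 hS2 hpn
    set c₀ : Fin n → ℝ := fun i => f (Pi.single i 1) with hc₀
    have hf : ∀ y : Fin n → ℝ, f y = ∑ i, y i * c₀ i := by
      intro y
      conv_lhs => rw [pi_eq_sum_univ y]
      rw [map_sum]
      refine Finset.sum_congr rfl fun i _ => ?_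
      rw [map_smul, smul_eq_mul]
      congr 1
      show f _ = f _
      congr 1; funext j; simp [Pi.single, Function.update, eq_comm]
    have hc₀nn : ∀ i, 0 ≤ c₀ i := by
      intro i
      by_contra h
      push_neg at h
      set t := (f R₀ - u) / (-c₀ i) with htdef
      have htnn : 0 ≤ t := div_nonneg (by linarith [hfS R₀ hR₀]) (by linarith)
      have hsingle : ∀ j, (0:ℝ) ≤ (Pi.single i 1 : Fin n → ℝ) j := fun j => by
        rcases eq_or_ne j i with rfl | hij
        · simp
        · simp [Pi.single_apply, hij]
      have hmem : (fun j => R₀ j + t * (Pi.single i 1 : Fin n → ℝ) j) ∈ S := by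
        refine hS4 R₀ hR₀ _ fun j => ?_
        show R₀ j ≤ R₀ j + t * (Pi.single i 1 : Fin n → ℝ) j
        nlinarith [hsingle j]
      have h5 := hfS _ hmem
      rw [hf] at h5
      have hexp : ∑ j, (R₀ j + t * (Pi.single i 1 : Fin n → ℝ) j) * c₀ j
          = (∑ j, R₀ j * c₀ j) + t * c₀ i := by
        have hsplit : ∀ j, (R₀ j + t * (Pi.single i 1 : Fin n → ℝ) j) * c₀ j
            = R₀ j * c₀ j + (if j = i then t * c₀ i else 0) := by
          intro j
          rcases eq_or_ne j i with rfl | hij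
          · simp [Pi.single_apply]; ring
          · simp [Pi.single_apply, hij]
        rw [Finset.sum_congr rfl (fun j _ => hsplit j), Finset.sum_add_distrib]
        congr 1
        simp
      rw [hexp] at h5
      have hfR₀ : f R₀ = ∑ j, R₀ j * c₀ j := hf R₀
      have hc₀ne : c₀ i ≠ 0 := ne_of_lt h
      have htc : t * c₀ i = u - f R₀ := by
        rw [htdef, div_mul_eq_mul_div, div_eq_iff (neg_ne_zero.2 hc₀ne)]
        ring
      rw [← hfR₀, htc] at h5
      linarith
    have hfp : f p = ∑ i, p i * c₀ i := hf p
    have hup : f p < u := hfu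
    set η := (u - f p) / ((∑ i, p i) + 1) with hη
    have hpsum : 0 ≤ ∑ i, p i := Finset.sum_nonneg fun i _ => hpnn i
    have hηpos : 0 < η := div_pos (by linarith) (by linarith)
    set c' : Fin n → ℝ := fun i => c₀ i + η with hc'
    have hc'pos : ∀ i, 0 < c' i := fun i => by
      have := hc₀nn i
      show 0 < c₀ i + η
      linarith
    have hsplit : ∀ b : Fin n → ℝ, ∑ i, c' i * b i = (∑ i, b i * c₀ i) + η * ∑ i, b i := by
      intro b
      rw [Finset.mul_sum, ← Finset.sum_add_distrib]
      exact Finset.sum_congr rfl fun i _ => by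
        show (c₀ i + η) * b i = b i * c₀ i + η * b i
        ring
    have hVc' : u ≤ V c' := by
      rw [hV]
      refine le_csInf (hVim c') ?_
      rintro x ⟨b, hb, rfl⟩
      have h1 : u < f b := hfS b hb
      rw [hf] at h1
      have h3 : (0:ℝ) ≤ ∑ i, b i := Finset.sum_nonneg fun i _ => hS0 b hb i
      show u ≤ ∑ i, c' i * b i
      rw [hsplit b]
      nlinarith
    have hc'p : ∑ i, c' i * p i ≤ u := by
      have h3 : η * ∑ i, p i ≤ u - f p := by
        rw [hη, div_mul_eq_mul_div, div_le_iff₀ (by linarith)]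
        nlinarith
      rw [hsplit p, ← hfp]
      linarith
    have hVc'pos : 0 < V c' := hVpos c' hc'pos
    have hc'R : ∑ i, c' i * R i = (φ R + δ) * ∑ i, c' i * p i := by
      rw [Finset.mul_sum]
      refine Finset.sum_congr rfl fun i _ => ?_
      show c' i * R i = (φ R + δ) * (c' i * ((φ R + δ)⁻¹ * R i))
      field_simp
    have hxle : (∑ i, c' i * R i) / V c' ≤ φ R + δ := by
      rw [div_le_iff₀ hVc'pos, hc'R]
      have h4 : ∑ i, c' i * p i ≤ V c' := le_trans hc'p hVc'
      nlinarith
    calc sInf B ≤ (∑ i, c' i * R i) / V c' := csInf_le ⟨φ R, hBlb⟩ ⟨c', hc'pos, rfl⟩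
      _ ≤ φ R + δ := hxle
end
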